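/- Let Ω be a minimum strong geodetic set of P_r □ G with covering geodesic family Ĩ(Ω), and suppose the G-layer G^i (for some 1 ≤ i ≤ r) contains no edge of any geodesic in Ĩ(Ω) and no vertex of Ω. Then i ≠ 1 and i ≠ r. -/
import Mathlib


open SimpleGraph

/-- A walk is a geodesic if its length equals the distance between its endpoints. -/
def IsGeodesic {V : Type*} (G : SimpleGraph V) {x y : V} (p : G.Walk x y) : Prop :=
  p.length = G.dist x y

/-- `S` is a strong geodetic set witnessed by the family `f` of fixed geodesics:
every walk `f x y` is a geodesic, and every vertex lies on one of the geodesics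
between two vertices of `S`. -/
def IsStrongGeodeticSetWith {V : Type*} (G : SimpleGraph V) (S : Set V)
    (f : (x y : V) → G.Walk x y) : Prop :=
  (∀ x y : V, IsGeodesic G (f x y)) ∧
    ∀ v : V, ∃ x ∈ S, ∃ y ∈ S, v ∈ (f x y).support

/-- The strong geodetic number of a graph. -/
noncomputable def sg {V : Type*} [Fintype V] (G : SimpleGraph V) : ℕ :=
  sInf {n | ∃ S : Finset V, S.card = n ∧ ∃ f, IsStrongGeodeticSetWith G (↑S) f}

/-- an untouched `G`-layer of `P_r □ G` (with respect to a minimum strong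
geodetic set `Ω` and its covering geodesic family) is neither the first nor the last
layer. -/
theorem untouched_layer_not_extreme {α : Type*} [Nonempty α] (G : SimpleGraph α) (r : ℕ)
    (Ω : Finset (Fin r × α)) (f : (x y : Fin r × α) → (pathGraph r □ G).Walk x y)
    (hf : IsStrongGeodeticSetWith (pathGraph r □ G) (↑Ω) f)
    (hmin : ∀ (S : Finset (Fin r × α)) (g : (x y : Fin r × α) → (pathGraph r □ G).Walk x y),
      IsStrongGeodeticSetWith (pathGraph r □ G) (↑S) g → Ω.card ≤ S.card)
    (i : Fin r)
    (hedge : ∀ x ∈ Ω, ∀ y ∈ Ω, ∀ a b : α,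
      s(((i, a) : Fin r × α), ((i, b) : Fin r × α)) ∉ (f x y).edges)
    (hvert : ∀ a : α, (i, a) ∉ Ω) :
    (i : ℕ) ≠ 0 ∧ (i : ℕ) ≠ r - 1 := by
  classical
  have hrpos : 0 < r := i.pos
  -- Key: if `i` has a unique neighbor `j` in the path graph, we get a contradiction.
  have key : ∀ j : Fin r, (∀ u : Fin r, (pathGraph r).Adj i u → u = j) → False := by
    intro j huniq
    obtain ⟨a⟩ := ‹Nonempty α›
    obtain ⟨x, hx, y, hy, hsup⟩ := hf.2 (i, a)
    set p := f x y with hp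
    have hne_x : (x : Fin r × α) ≠ (i, a) := by
      rintro rfl; exact hvert a hx
    have hne_y : (y : Fin r × α) ≠ (i, a) := by
      rintro rfl; exact hvert a hy
    obtain ⟨q, r', hqr⟩ := SimpleGraph.Walk.mem_support_iff_exists_append.mp hsup
    -- analyze a neighbor of (i,a) along the walk
    have step : ∀ u : Fin r × α, (pathGraph r □ G).Adj (i, a) u →
        s(((i, a) : Fin r × α), u) ∈ p.edges → u = (j, a) := by
      rintro ⟨u1, u2⟩ hadj hmem
      rcases (SimpleGraph.boxProd_adj.mp hadj) with ⟨h1, h2⟩ | ⟨h1, h2⟩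
      · simp only at h1 h2
        rw [huniq u1 h1, ← h2]
      · exfalso
        simp only at h1 h2
        rw [← h2] at hmem
        exact hedge x hx y hy a u2 hmem
    -- first edge after (i,a) in r'
    have hr'nn : ¬ r'.Nil := by
      intro h
      exact hne_y (h.eq.symm)
    obtain ⟨w, hadjw, r2, hr2⟩ := SimpleGraph.Walk.not_nil_iff.mp hr'nn
    -- last edge before (i,a) in q, via its reverse
    have hqnn : ¬ q.reverse.Nil := by
      intro h
      exact hne_x h.eq.symm
    obtain ⟨u, hadju, q2, hq2⟩ := SimpleGraph.Walk.not_nil_iff.mp hqnn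
    have hmemu : s(((i, a) : Fin r × α), u) ∈ p.edges := by
      have h1 : s(((i, a) : Fin r × α), u) ∈ q.reverse.edges := by
        rw [hq2]; simp
      rw [SimpleGraph.Walk.edges_reverse, List.mem_reverse] at h1
      rw [hqr, SimpleGraph.Walk.edges_append, List.mem_append]
      exact Or.inl h1
    have hmemw : s(((i, a) : Fin r × α), w) ∈ p.edges := by
      rw [hqr, SimpleGraph.Walk.edges_append, List.mem_append]
      right
      rw [hr2]; simp
    have hu : u = (j, a) := step u hadju hmemu
    have hw : w = (j, a) := step w hadjw hmemw
    -- u appears in q, so shortcut: go to u in q, then continue with r2 (which starts at w = u)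
    have husup : u ∈ q.support := by
      have : u ∈ q.reverse.support := by
        rw [hq2]
        exact List.mem_cons_of_mem _ q2.start_mem_support
      simpa using this
    subst hu
    subst hw
    let short : (pathGraph r □ G).Walk x y := (q.takeUntil _ husup).append r2
    have hlen1 : (pathGraph r □ G).dist x y ≤ short.length := SimpleGraph.dist_le short
    have hlen2 : short.length ≤ q.length + r2.length := by
      have := q.length_takeUntil_le husup
      simp only [short, SimpleGraph.Walk.length_append]
      omega
    have hplen : p.length = q.length + (r2.length + 1) := by
      rw [hqr, SimpleGraph.Walk.length_append, hr2, SimpleGraph.Walk.length_cons]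
    have hgeo : p.length = (pathGraph r □ G).dist x y := hf.1 x y
    omega
  constructor
  · intro h0
    rcases Nat.lt_or_ge r 2 with hr | hr
    · -- r = 1 : every vertex is in layer i, contradicting coverage
      interval_cases r
      obtain ⟨a⟩ := ‹Nonempty α›
      obtain ⟨⟨x1, x2⟩, hx, _⟩ := hf.2 (i, a)
      have hx1 : x1 = i := Subsingleton.elim _ _
      rw [hx1] at hx
      exact hvert x2 hx
    · exact key ⟨1, by omega⟩ (by
        intro u hadj
        rcases SimpleGraph.pathGraph_adj.mp hadj with h | h
        · apply Fin.ext; simp [h0] at h ⊢; omega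
        · exfalso; omega)
  · intro h0
    rcases Nat.lt_or_ge r 2 with hr | hr
    · interval_cases r
      obtain ⟨a⟩ := ‹Nonempty α›
      obtain ⟨⟨x1, x2⟩, hx, _⟩ := hf.2 (i, a)
      have hx1 : x1 = i := Subsingleton.elim _ _
      rw [hx1] at hx
      exact hvert x2 hx
    · exact key ⟨r - 2, by omega⟩ (by
        intro u hadj
        have hu := u.isLt
        rcases SimpleGraph.pathGraph_adj.mp hadj with h | h
        · exfalso; omega
        · apply Fin.ext; simp at h ⊢; omega)
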